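/- Define for a receiver k the function f(k) = ψ_k/N · (1 + ϱ_k·ϱ_h/(N-1)) where N ≥ 2 is a positive integer, ψ_k, ϱ_k are nonnegative reals. Suppose receivers i and h satisfy ψ_i > ψ_h ≥ 0 and 0 ≤ ϱ_i < ϱ_h. Then for any finite index set S not containing i and h, and any nonnegative parameters (ψ_k, ϱ_k) for k ∈ S, we have ∑_{k∈S} ψ_k/N·(1 + ϱ_k·ϱ_h/(N-1)) + ψ_i/N·(1 + ϱ_i·ϱ_h/(N-1)) > ∑_{k∈S} ψ_k/N·(1 + ϱ_k·ϱ_i/(N-1)) + ψ_h/N·(1 + ϱ_i·ϱ_h/(N-1)). In words: the expected vertex degree E[Δ_h] exceeds E[Δ_i] whenever ψ_i > ψ_h and ϱ_i < ϱ_h. -/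
import Mathlib


/-- Theorem 2 of the paper: if `ψ i > ψ h` and `ϱ i < ϱ h` (all nonnegative),
then the expected vertex degree `E[Δ h]` exceeds `E[Δ i]`. -/
theorem expected_degree_comparison {ι : Type*} (N : ℕ) (hN : 2 ≤ N)
    (S : Finset ι) (i h : ι) (hiS : i ∉ S) (hhS : h ∉ S) (hih : i ≠ h)
    (ψ ϱ : ι → ℝ) (hψ : ∀ k, 0 ≤ ψ k) (hϱ : ∀ k, 0 ≤ ϱ k)
    (hψih : ψ h < ψ i) (hϱih : ϱ i < ϱ h) :
    ∑ k ∈ S, ψ k / N * (1 + ϱ k * ϱ i / (N - 1)) +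
      ψ h / N * (1 + ϱ i * ϱ h / (N - 1)) <
    ∑ k ∈ S, ψ k / N * (1 + ϱ k * ϱ h / (N - 1)) +
      ψ i / N * (1 + ϱ i * ϱ h / (N - 1)) := by
  have hN1 : (0:ℝ) < (N:ℝ) - 1 := by
    have : (2:ℝ) ≤ (N:ℝ) := by exact_mod_cast hN
    linarith
  have hN0 : (0:ℝ) < (N:ℝ) := by linarith
  apply add_lt_add_of_le_of_lt
  · apply Finset.sum_le_sum
    intro k _
    have h1 : 0 ≤ ψ k / N := div_nonneg (hψ k) hN0.le
    apply mul_le_mul_of_nonneg_left _ h1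
    have h2 : ϱ k * ϱ i ≤ ϱ k * ϱ h := mul_le_mul_of_nonneg_left hϱih.le (hϱ k)
    have h3 : ϱ k * ϱ i / ((N:ℝ)-1) ≤ ϱ k * ϱ h / ((N:ℝ)-1) := by gcongr
    linarith
  · apply mul_lt_mul_of_pos_right
    · exact div_lt_div_of_pos_right hψih hN0
    · have : 0 ≤ ϱ i * ϱ h / ((N:ℝ) - 1) :=
        div_nonneg (mul_nonneg (hϱ i) (hϱ h)) hN1.le
      linarith
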